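/- There exists exactly one formal power series f = Σ_{n≥0} κ_n q^n with real coefficients satisfying q·f² − (q³ + 2q − 1)·f − 1 = 0 in ℝ⟦q⟧; it has κ_0 = 1, and its coefficients satisfy limsup_{n→∞} |κ_n|^{1/n} = R_{√2}^{-1}, i.e. the radius of convergence of f equals R_{√2}. -/

import Mathlib

/-!
Completing the square, `f` solves the equation iff `g = 2Xf - (X³ + 2X - 1)` satisfies
`g² = Δ := (X³ + 2X - 1)² + 4X` with `g(0) = 1`; moreover `|κₙ| = |g_{n+1}| / 2` for `n ≥ 3`. Over
`ℂ`, `Δ = (1 - X + X²)(1 - τX + X²)(1 - τ̄X + X²)` with `τ = (-1 + i√7)/2`, and each factor is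
`(1 - aX)(1 - a⁻¹X)`. Since `‖a‖ + ‖a‖⁻¹ = (‖t - 2‖ + ‖t + 2‖) / 2` for `t = a + a⁻¹`, all these
`a` have modulus in `[R, R⁻¹]` (with `R = R_{√2}`), and for `t = τ` the two moduli are exactly `R`
and `R⁻¹`. So `g` is a product of six binomial series `√(1 - aX)`, whose coefficients are at most
`‖a‖ⁿ`, and `|κₙ|` grows at most like `n⁵ R⁻ⁿ`. Conversely, if `|κₙ| ≤ cⁿ` with `c < R⁻¹`, then
`g` and `g'` converge absolutely at the root `z` of `1 - τX + X²` with `|z| = R`; there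
`g(z)² = Δ(z) = 0` while `2 g(z) g'(z) = Δ'(z) ≠ 0`, as `z` is a simple root of `Δ`.
-/

/-- `R_{√2} = (1 + √2 − √(2√2 − 1))/2`. -/
noncomputable def Rsqrt2 : ℝ := (1 + Real.sqrt 2 - Real.sqrt (2 * Real.sqrt 2 - 1)) / 2

open PowerSeries Filter Finset ComplexConjugate

theorem Real.le_of_add_inv_le_add_inv {r ρ : ℝ} (hr : 0 < r) (hρ : 1 ≤ ρ)
    (h : r + r⁻¹ ≤ ρ + ρ⁻¹) : r ≤ ρ := by
  by_contra! hlt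
  have hρ0 : 0 < ρ := one_pos.trans_le hρ
  have key : r + r⁻¹ - (ρ + ρ⁻¹) = (r - ρ) * (r * ρ - 1) / (r * ρ) := by field_simp; ring
  have : 0 < (r - ρ) * (r * ρ - 1) / (r * ρ) := by
    apply div_pos (mul_pos (by linarith) (by nlinarith)) (by positivity)
  linarith

theorem Real.eq_or_eq_inv_of_add_inv_eq {r ρ : ℝ} (hr : 0 < r) (hρ : 0 < ρ)
    (h : r + r⁻¹ = ρ + ρ⁻¹) : r = ρ ∨ r = ρ⁻¹ := by
  have key : (r - ρ) * (r * ρ - 1) = 0 := by field_simp at h; linear_combination h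
  rcases mul_eq_zero.mp key with h1 | h1
  · exact Or.inl (sub_eq_zero.mp h1)
  · exact Or.inr (eq_inv_of_mul_eq_one_left (sub_eq_zero.mp h1))

namespace Complex

theorem exists_add_inv_eq (s : ℂ) : ∃ a : ℂ, a ≠ 0 ∧ a + a⁻¹ = s := by
  obtain ⟨a, ha⟩ := exists_quadratic_eq_zero (one_ne_zero' ℂ)
    (IsAlgClosed.exists_eq_mul_self (discrim 1 (-s) 1))
  have ha0 : a ≠ 0 := by rintro rfl; simp at ha
  exact ⟨a, ha0, by field_simp; linear_combination ha⟩

theorem norm_add_inv_sub_two_add_norm_add_inv_add_two {a : ℂ} (ha : a ≠ 0) :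
    ‖a + a⁻¹ - 2‖ + ‖a + a⁻¹ + 2‖ = 2 * (‖a‖ + ‖a‖⁻¹) := by
  have hsub : a + a⁻¹ - 2 = (a - 1) ^ 2 / a := by field_simp; ring
  have hadd : a + a⁻¹ + 2 = (a + 1) ^ 2 / a := by field_simp; ring
  have hpar := parallelogram_law_with_norm ℝ a 1
  have ha' : ‖a‖ ≠ 0 := norm_ne_zero_iff.mpr ha
  rw [hsub, hadd, norm_div, norm_div, norm_pow, norm_pow, norm_one] at *
  field_simp
  linear_combination hpar

end Complex

theorem Ring.abs_choose_half_le_one (n : ℕ) : |Ring.choose (2⁻¹ : ℚ) n| ≤ 1 := by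
  induction n with
  | zero => simp
  | succ n ih =>
    have hrec : ((n + 1 : ℕ) : ℚ) * Ring.choose (2⁻¹ : ℚ) (n + 1)
        = Ring.choose (2⁻¹ : ℚ) n * (2⁻¹ - n) := by
      have h := Ring.choose_smul_choose (2⁻¹ : ℚ) (Nat.le_succ n)
      rwa [Nat.choose_succ_self_right, show n.succ - n = 1 by omega, Ring.choose_one_right,
        nsmul_eq_mul] at h
    have hpos : (0 : ℚ) < (n + 1 : ℕ) := by positivity
    rw [← mul_le_mul_iff_of_pos_left hpos, mul_one, ← abs_of_pos hpos, ← abs_mul, hrec, abs_mul]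
    have hhalf : |2⁻¹ - (n : ℚ)| ≤ |((n + 1 : ℕ) : ℚ)| := by
      rw [abs_of_pos hpos, abs_le]; push_cast; constructor <;> linarith [n.cast_nonneg (α := ℚ)]
    simpa using mul_le_mul ih hhalf (abs_nonneg _) zero_le_one

theorem eventually_abs_le_pow_of_abs_le_mul_pow_mul_pow {x : ℕ → ℝ} {A ρ c : ℝ} {k : ℕ} (hρ : 0 < ρ)
    (hc : ρ < c) (hx : ∀ᶠ n in atTop, |x n| ≤ A * n ^ k * ρ ^ n) :
    ∀ᶠ n in atTop, |x n| ≤ c ^ n := by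
  have hc0 : 0 < c := hρ.trans hc
  have hr : 1 < c / ρ := (one_lt_div hρ).mpr hc
  have hlim : Tendsto (fun n : ℕ ↦ A * ((n : ℝ) ^ k / (c / ρ) ^ n)) atTop (nhds 0) := by
    simpa using (tendsto_pow_const_div_const_pow_of_one_lt k hr).const_mul A
  filter_upwards [hx, hlim.eventually (ge_mem_nhds zero_lt_one)] with n hn hsmall
  calc |x n| ≤ A * n ^ k * ρ ^ n := hn
    _ = A * ((n : ℝ) ^ k / (c / ρ) ^ n) * c ^ n := by
        rw [div_pow]
        field_simp
    _ ≤ 1 * c ^ n := mul_le_mul_of_nonneg_right hsmall (by positivity)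
    _ = c ^ n := one_mul _

theorem Real.limsup_abs_rpow_inv_eq {x : ℕ → ℝ} {ρ : ℝ} (hρ : 0 < ρ)
    (hup : ∀ c, ρ < c → ∀ᶠ n in atTop, |x n| ≤ c ^ n)
    (hlow : ∀ c, 0 < c → c < ρ → ¬ ∀ᶠ n in atTop, |x n| ≤ c ^ n) :
    limsup (fun n : ℕ ↦ |x n| ^ (n : ℝ)⁻¹) atTop = ρ := by
  set u := fun n : ℕ ↦ |x n| ^ (n : ℝ)⁻¹
  have hroot : ∀ {n : ℕ} {c : ℝ}, 0 < n → 0 ≤ c → (|x n| ≤ c ^ n ↔ u n ≤ c) := by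
    intro n c hn hc
    rw [Real.rpow_inv_le_iff_of_pos (abs_nonneg _) hc (by positivity), Real.rpow_natCast]
  have hup' : ∀ c, ρ < c → ∀ᶠ n in atTop, u n ≤ c := fun c hc ↦ by
    filter_upwards [hup c hc, eventually_gt_atTop 0] with n hn hn0
    exact (hroot hn0 (hρ.trans hc).le).mp hn
  have hlow' : ∀ c, 0 < c → c < ρ → ∃ᶠ n in atTop, c ≤ u n := fun c hc0 hc ↦ by
    refine ((not_eventually.mp (hlow c hc0 hc)).and_eventually (eventually_gt_atTop 0)).mono ?_
    exact fun n ⟨hn, hn0⟩ ↦ le_of_not_ge fun h ↦ hn ((hroot hn0 hc0.le).mpr h)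
  have hbdd : IsBoundedUnder (· ≤ ·) atTop u :=
    isBoundedUnder_of_eventually_le (hup' _ (lt_add_one ρ))
  have hcobdd : IsCoboundedUnder (· ≤ ·) atTop u :=
    isCoboundedUnder_le_of_le atTop (fun n ↦ Real.rpow_nonneg (abs_nonneg _) _)
  refine le_antisymm (le_of_forall_gt_imp_ge_of_dense fun c hc ↦ ?_)
    (le_of_forall_lt_imp_le_of_dense fun c hc ↦ ?_)
  · exact limsup_le_of_le hcobdd (hup' c hc)
  · have hc' : 0 < max c (ρ / 2) := lt_max_of_lt_right (half_pos hρ)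
    exact (le_max_left _ _).trans (le_limsup_of_frequently_le
      (hlow' _ hc' (max_lt hc (half_lt_self hρ))) hbdd)

namespace PowerSeries

section Quadratic
variable {A : Type*} [CommRing A] {b f g : A⟦X⟧}

theorem constantCoeff_eq_one_of_quadratic (hb : constantCoeff b = -1)
    (hf : X * f ^ 2 - b * f - 1 = 0) : constantCoeff f = 1 := by
  have h := congrArg constantCoeff hf
  simp only [map_sub, map_mul, map_pow, constantCoeff_X, hb, map_one, map_zero] at h
  linear_combination h

theorem eq_of_quadratic (hb : IsUnit (constantCoeff b))
    (hf : X * f ^ 2 - b * f - 1 = 0) (hg : X * g ^ 2 - b * g - 1 = 0) : f = g := by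
  have hunit : IsUnit (X * (f + g) - b) := by
    rw [isUnit_iff_constantCoeff]
    simpa using hb.neg
  have h : (f - g) * (X * (f + g) - b) = 0 := by linear_combination hf - hg
  exact sub_eq_zero.mp ((hunit.mul_left_eq_zero).mp h)

theorem sq_two_mul_X_mul_sub_eq (hf : X * f ^ 2 - b * f - 1 = 0) :
    (2 * X * f - b) ^ 2 = b ^ 2 + 4 * X := by
  linear_combination 4 * X * hf

end Quadratic

section SquareRoot
variable {K : Type*} [Field K] [CharZero K]

theorem binomialSeries_half_sq : binomialSeries K (2⁻¹ : ℚ) ^ 2 = 1 + X := by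
  rw [sq, ← binomialSeries_add, show (2⁻¹ + 2⁻¹ : ℚ) = (1 : ℕ) by norm_num, binomialSeries_nat,
    pow_one]

theorem exists_sq_eq_of_constantCoeff_eq_one {φ : K⟦X⟧} (hφ : constantCoeff φ = 1) :
    ∃ ψ : K⟦X⟧, ψ ^ 2 = φ ∧ constantCoeff ψ = 1 := by
  have hsub : HasSubst (φ - 1) := HasSubst.of_constantCoeff_zero' (by simp [hφ])
  obtain ⟨r, hr⟩ : X ∣ binomialSeries K (2⁻¹ : ℚ) - 1 := by
    rw [X_dvd_iff]; simp
  have hone : (1 : K⟦X⟧).subst (φ - 1) = 1 := by rw [← coe_substAlgHom hsub, map_one]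
  refine ⟨(binomialSeries K (2⁻¹ : ℚ)).subst (φ - 1), ?_, ?_⟩
  · rw [← subst_pow hsub, binomialSeries_half_sq, subst_add hsub, subst_X hsub, hone]
    ring
  · rw [eq_add_of_sub_eq hr, subst_add hsub, subst_mul hsub, subst_X hsub, hone]
    simp [hφ]

theorem exists_quadratic {b : K⟦X⟧} (hb : constantCoeff b = -1) :
    ∃ f : K⟦X⟧, X * f ^ 2 - b * f - 1 = 0 := by
  obtain ⟨ψ, hψ, hψ0⟩ := exists_sq_eq_of_constantCoeff_eq_one (φ := b ^ 2 + 4 * X) (by simp [hb])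
  obtain ⟨h, hh⟩ : X ∣ ψ + b := by rw [X_dvd_iff]; simp [hψ0, hb]
  set f := C (2⁻¹ : K) * h
  have hf : ψ + b = 2 * X * f := by
    rw [hh, ← map_ofNat C 2, mul_comm (C 2) X, mul_assoc, ← mul_assoc (C 2),
      ← map_mul, mul_inv_cancel₀ two_ne_zero, map_one, one_mul]
  have key : (4 * X : K⟦X⟧) * (X * f ^ 2 - b * f - 1) = 0 := by
    linear_combination hψ - (2 * X * f - b + ψ) * hf
  have h4 : (4 * X : K⟦X⟧) ≠ 0 := mul_ne_zero (fun h ↦ (show (4 : K) ≠ 0 by norm_num)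
    (by rw [← map_ofNat (constantCoeff (R := K)) 4, h, map_zero])) X_ne_zero
  exact ⟨f, (mul_eq_zero.mp key).resolve_left h4⟩

theorem eq_of_sq_eq_sq {ψ χ : K⟦X⟧} (h : ψ ^ 2 = χ ^ 2) (hψ : constantCoeff ψ = 1)
    (hχ : constantCoeff χ = 1) : ψ = χ := by
  refine (sq_eq_sq_iff_eq_or_eq_neg.mp h).resolve_right fun hneg ↦ ?_
  have h1 := congrArg constantCoeff hneg
  rw [map_neg, hψ, hχ] at h1
  norm_num at h1

theorem sq_rescale_binomialSeries_half (a : K) :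
    rescale a (binomialSeries K (2⁻¹ : ℚ)) ^ 2 = 1 + C a * X := by
  rw [← map_pow, binomialSeries_half_sq, map_add, map_one, rescale_X]

end SquareRoot

theorem norm_coeff_mul_le {R : Type*} [NormedRing R] {f g : R⟦X⟧} {ρ : ℝ} {j k : ℕ}
    (hρ : 0 ≤ ρ) (hf : ∀ n, ‖coeff n f‖ ≤ (n + 1) ^ j * ρ ^ n)
    (hg : ∀ n, ‖coeff n g‖ ≤ (n + 1) ^ k * ρ ^ n) (n : ℕ) :
    ‖coeff n (f * g)‖ ≤ (n + 1) ^ (j + k + 1) * ρ ^ n := by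
  rw [coeff_mul]
  have hterm : ∀ p ∈ antidiagonal n,
      ‖coeff p.1 f * coeff p.2 g‖ ≤ (n + 1) ^ (j + k) * ρ ^ n := by
    intro p hp
    have hpn := mem_antidiagonal.mp hp
    have h1 : (p.1 : ℝ) + 1 ≤ n + 1 := by gcongr; exact_mod_cast (by omega : p.1 ≤ n)
    have h2 : (p.2 : ℝ) + 1 ≤ n + 1 := by gcongr; exact_mod_cast (by omega : p.2 ≤ n)
    calc ‖coeff p.1 f * coeff p.2 g‖ ≤ ‖coeff p.1 f‖ * ‖coeff p.2 g‖ := norm_mul_le _ _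
      _ ≤ ((p.1 + 1) ^ j * ρ ^ p.1) * ((p.2 + 1) ^ k * ρ ^ p.2) :=
          mul_le_mul (hf _) (hg _) (norm_nonneg _) (by positivity)
      _ ≤ ((n + 1) ^ j * ρ ^ p.1) * ((n + 1) ^ k * ρ ^ p.2) := by gcongr
      _ = (n + 1) ^ (j + k) * ρ ^ n := by rw [← hpn]; ring
  calc ‖∑ p ∈ antidiagonal n, coeff p.1 f * coeff p.2 g‖
      ≤ ∑ p ∈ antidiagonal n, ‖coeff p.1 f * coeff p.2 g‖ := norm_sum_le _ _
    _ ≤ (antidiagonal n).card • ((n + 1) ^ (j + k) * ρ ^ n) :=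
        sum_le_card_nsmul _ _ _ hterm
    _ = _ := by rw [Nat.card_antidiagonal, nsmul_eq_mul]; push_cast; ring

theorem norm_coeff_rescale_binomialSeries_half_le (a : ℂ) (n : ℕ) :
    ‖coeff n (rescale a (binomialSeries ℂ (2⁻¹ : ℚ)))‖ ≤ ‖a‖ ^ n := by
  rw [coeff_rescale, binomialSeries_coeff, Rat.smul_one_eq_cast, norm_mul, norm_pow,
    Complex.norm_ratCast]
  exact mul_le_of_le_one_right (by positivity) (by exact_mod_cast Ring.abs_choose_half_le_one n)

theorem exists_sq_eq_one_sub_C_mul_X_add_X_sq (s : ℂ) {ρ : ℝ} (hρ : 1 ≤ ρ)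
    (hs : ‖s - 2‖ + ‖s + 2‖ ≤ 2 * (ρ + ρ⁻¹)) :
    ∃ S : ℂ⟦X⟧, S ^ 2 = 1 - C s * X + X ^ 2 ∧ constantCoeff S = 1 ∧
      ∀ n, ‖coeff n S‖ ≤ (n + 1) ^ 1 * ρ ^ n := by
  obtain ⟨a, ha, rfl⟩ := Complex.exists_add_inv_eq s
  have hnorm : ‖a‖ + ‖a‖⁻¹ ≤ ρ + ρ⁻¹ := by
    rw [Complex.norm_add_inv_sub_two_add_norm_add_inv_add_two ha] at hs; linarith
  have hpos : 0 < ‖a‖ := norm_pos_iff.mpr ha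
  have hV : ∀ b : ℂ, ‖b‖ ≤ ρ →
      ∀ n, ‖coeff n (rescale b (binomialSeries ℂ (2⁻¹ : ℚ)))‖ ≤ (n + 1) ^ 0 * ρ ^ n :=
    fun b hb n ↦ by
      simpa using (norm_coeff_rescale_binomialSeries_half_le b n).trans
        (pow_le_pow_left₀ (norm_nonneg _) hb n)
  have h1 : ‖-a‖ ≤ ρ := by rw [norm_neg]; exact Real.le_of_add_inv_le_add_inv hpos hρ hnorm
  have h2 : ‖-a⁻¹‖ ≤ ρ := by
    rw [norm_neg, norm_inv]
    exact Real.le_of_add_inv_le_add_inv (inv_pos.mpr hpos) hρ (by rwa [inv_inv, add_comm])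
  refine ⟨rescale (-a) (binomialSeries ℂ (2⁻¹ : ℚ)) * rescale (-a⁻¹) (binomialSeries ℂ (2⁻¹ : ℚ)),
    ?_, ?_, ?_⟩
  · rw [mul_pow, sq_rescale_binomialSeries_half, sq_rescale_binomialSeries_half]
    have : C a * C a⁻¹ = (1 : ℂ⟦X⟧) := by rw [← map_mul, mul_inv_cancel₀ ha, map_one]
    simp only [map_neg, map_add]
    linear_combination X ^ 2 * this
  · rw [map_mul, ← coeff_zero_eq_constantCoeff_apply, ← coeff_zero_eq_constantCoeff_apply]
    simp [coeff_rescale]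
  · exact norm_coeff_mul_le (zero_le_one.trans hρ) (hV _ h1) (hV _ h2)

section Evaluation
variable {𝕜 : Type*} [NormedField 𝕜] {f g : 𝕜⟦X⟧} {z : 𝕜}

theorem tsum_coeff_mul_mul_pow [CompleteSpace 𝕜] (hf : Summable fun n ↦ ‖coeff n f * z ^ n‖)
    (hg : Summable fun n ↦ ‖coeff n g * z ^ n‖) :
    ∑' n, coeff n (f * g) * z ^ n = (∑' n, coeff n f * z ^ n) * ∑' n, coeff n g * z ^ n := by
  rw [tsum_mul_tsum_eq_tsum_sum_antidiagonal_of_summable_norm hf hg]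
  congr 1 with n
  rw [coeff_mul, sum_mul]
  refine sum_congr rfl fun p hp ↦ ?_
  rw [← mem_antidiagonal.mp hp, pow_add]
  ring

theorem tsum_coeff_coe_mul_pow (p : Polynomial 𝕜) (z : 𝕜) :
    ∑' n, coeff n (p : 𝕜⟦X⟧) * z ^ n = p.eval z := by
  rw [Polynomial.eval_eq_sum_range, tsum_eq_sum (s := range (p.natDegree + 1))]
  · simp only [Polynomial.coeff_coe]
  · intro n hn
    rw [Polynomial.coeff_coe, Polynomial.coeff_eq_zero_of_natDegree_lt (by simpa using hn),
      zero_mul]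

theorem summable_norm_mul_pow {a : ℕ → 𝕜} {A c : ℝ}
    (ha : ∀ᶠ n in atTop, ‖a n‖ ≤ A * (n + 1) * c ^ n) (hc : 0 ≤ c) (hcz : c * ‖z‖ < 1) :
    Summable fun n ↦ ‖a n * z ^ n‖ := by
  have hr : ‖c * ‖z‖‖ < 1 := by rwa [Real.norm_of_nonneg (by positivity)]
  have hsum : Summable fun n : ℕ ↦ A * (((n : ℝ) ^ 1 * (c * ‖z‖) ^ n) + (c * ‖z‖) ^ n) :=
    ((summable_pow_mul_geometric_of_norm_lt_one 1 hr).add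
      (summable_geometric_of_lt_one (by positivity) hcz)).mul_left A
  refine Summable.of_norm_bounded_eventually_nat hsum ?_
  filter_upwards [ha] with n hn
  rw [norm_norm, norm_mul, norm_pow]
  calc ‖a n‖ * ‖z‖ ^ n ≤ A * (n + 1) * c ^ n * ‖z‖ ^ n := by gcongr
    _ = _ := by ring

theorem eventually_norm_coeff_derivative_le {A c : ℝ}
    (hf : ∀ᶠ n in atTop, ‖coeff n f‖ ≤ A * c ^ n) :
    ∀ᶠ n in atTop, ‖coeff n (d⁄dX 𝕜 f)‖ ≤ A * c * (n + 1) * c ^ n := by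
  filter_upwards [(tendsto_add_atTop_nat 1).eventually hf] with n hn
  rw [coeff_derivative, norm_mul]
  calc ‖coeff (n + 1) f‖ * ‖(n + 1 : 𝕜)‖ ≤ A * c ^ (n + 1) * (n + 1) := by
        gcongr
        · exact (norm_nonneg _).trans hn
        · exact_mod_cast (Nat.norm_cast_le (α := 𝕜) (n + 1)).trans (by simp)
    _ = _ := by ring

theorem not_eventually_norm_coeff_le_of_sq_eq_coe [CompleteSpace 𝕜] {P : Polynomial 𝕜}
    (hg : g ^ 2 = P) (hPz : P.eval z = 0) (hP'z : P.derivative.eval z ≠ 0) {A c : ℝ}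
    (hc : 0 ≤ c) (hcz : c * ‖z‖ < 1) : ¬ ∀ᶠ n in atTop, ‖coeff n g‖ ≤ A * c ^ n := by
  intro hbound
  have hsg : Summable fun n ↦ ‖coeff n g * z ^ n‖ := by
    refine summable_norm_mul_pow (A := A) ?_ hc hcz
    filter_upwards [hbound] with n hn
    calc ‖coeff n g‖ ≤ A * c ^ n := hn
      _ ≤ (n + 1) * (A * c ^ n) :=
        le_mul_of_one_le_left ((norm_nonneg _).trans hn) (by linarith [n.cast_nonneg (α := ℝ)])
      _ = _ := by ring
  have hsg' : Summable fun n ↦ ‖coeff n (d⁄dX 𝕜 g) * z ^ n‖ :=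
    summable_norm_mul_pow (eventually_norm_coeff_derivative_le hbound) hc hcz
  have hG : ∑' n, coeff n g * z ^ n = 0 := by
    rw [← mul_self_eq_zero, ← tsum_coeff_mul_mul_pow hsg hsg, ← sq, hg, tsum_coeff_coe_mul_pow,
      hPz]
  have hder : d⁄dX 𝕜 (g ^ 2) = C 2 * (g * d⁄dX 𝕜 g) := by
    rw [sq, Derivation.leibniz, smul_eq_mul, map_ofNat]
    ring
  apply hP'z
  rw [← tsum_coeff_coe_mul_pow, ← derivative_coe, ← hg, hder]
  simp_rw [coeff_C_mul, mul_assoc]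
  rw [tsum_mul_left, tsum_coeff_mul_mul_pow hsg hsg', hG, zero_mul, mul_zero]

end Evaluation
end PowerSeries

-- `R` and `R⁻¹` are the roots of `r² - (1 + √2) r + 1`, whose discriminant is `2√2 - 1`.
theorem Rsqrt2_mul_eq_one : Rsqrt2 * ((1 + √2 + √(2 * √2 - 1)) / 2) = 1 := by
  have h2 := Real.sq_sqrt (show (0 : ℝ) ≤ 2 by norm_num)
  have hv := Real.sq_sqrt (show (0 : ℝ) ≤ 2 * √2 - 1 by nlinarith [Real.sqrt_nonneg 2])
  rw [Rsqrt2]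
  linear_combination (1 / 4 : ℝ) * h2 - (1 / 4 : ℝ) * hv

theorem Rsqrt2_pos : 0 < Rsqrt2 := by
  refine pos_of_mul_pos_left (Rsqrt2_mul_eq_one ▸ one_pos) ?_
  positivity

theorem Rsqrt2_inv : Rsqrt2⁻¹ = (1 + √2 + √(2 * √2 - 1)) / 2 :=
  inv_eq_of_mul_eq_one_right Rsqrt2_mul_eq_one

theorem Rsqrt2_add_inv : Rsqrt2 + Rsqrt2⁻¹ = 1 + √2 := by
  rw [Rsqrt2_inv, Rsqrt2]; ring

theorem Rsqrt2_lt_one : Rsqrt2 < 1 := by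
  have h2 := Real.sq_sqrt (show (0 : ℝ) ≤ 2 by norm_num)
  have hv : √2 - 1 < √(2 * √2 - 1) := by
    apply Real.lt_sqrt_of_sq_lt
    nlinarith [Real.sqrt_nonneg 2]
  rw [Rsqrt2]; linarith

theorem one_le_Rsqrt2_inv : 1 ≤ Rsqrt2⁻¹ := (one_lt_inv₀ Rsqrt2_pos).mpr Rsqrt2_lt_one |>.le

namespace QSqrtTwoPlusOne

noncomputable def τ : ℂ := ⟨-1 / 2, √7 / 2⟩

theorem τ_add_conj : τ + conj τ = -1 := by
  apply Complex.ext <;> simp [τ]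

theorem τ_mul_conj : τ * conj τ = 2 := by
  have h7 := Real.sq_sqrt (show (0 : ℝ) ≤ 7 by norm_num)
  apply Complex.ext <;> simp [τ]
  · linear_combination (1 / 4 : ℝ) * h7
  · ring

theorem norm_τ_sub_two_add_norm_τ_add_two :
    ‖τ - 2‖ + ‖τ + 2‖ = 2 * (Rsqrt2⁻¹ + Rsqrt2⁻¹⁻¹) := by
  have h7 := Real.sq_sqrt (show (0 : ℝ) ≤ 7 by norm_num)
  have h2 := Real.sq_sqrt (show (0 : ℝ) ≤ 2 by norm_num)
  have hsub : ‖τ - 2‖ = 2 * √2 := by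
    refine (sq_eq_sq₀ (norm_nonneg _) (by positivity)).mp ?_
    rw [Complex.sq_norm, Complex.normSq_apply]
    simp [τ]
    linear_combination (1 / 4 : ℝ) * h7 - 4 * h2
  have hadd : ‖τ + 2‖ = 2 := by
    refine (sq_eq_sq₀ (norm_nonneg _) (by positivity)).mp ?_
    rw [Complex.sq_norm, Complex.normSq_apply]
    simp [τ]
    linear_combination (1 / 4 : ℝ) * h7
  rw [inv_inv, add_comm Rsqrt2⁻¹, Rsqrt2_add_inv, hsub, hadd]; ring

theorem norm_conj_τ_sub_two_add_norm_conj_τ_add_two :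
    ‖conj τ - 2‖ + ‖conj τ + 2‖ = 2 * (Rsqrt2⁻¹ + Rsqrt2⁻¹⁻¹) := by
  have hsub : conj τ - 2 = conj (τ - 2) := by rw [map_sub, map_ofNat]
  have hadd : conj τ + 2 = conj (τ + 2) := by rw [map_add, map_ofNat]
  rw [hsub, hadd, Complex.norm_conj, Complex.norm_conj, norm_τ_sub_two_add_norm_τ_add_two]

theorem exists_add_inv_eq_τ_and_norm_eq : ∃ z : ℂ, z ≠ 0 ∧ z + z⁻¹ = τ ∧ ‖z‖ = Rsqrt2 := by
  obtain ⟨a, ha, haτ⟩ := Complex.exists_add_inv_eq τ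
  have hnorm := Complex.norm_add_inv_sub_two_add_norm_add_inv_add_two ha
  rw [haτ, norm_τ_sub_two_add_norm_τ_add_two] at hnorm
  rcases Real.eq_or_eq_inv_of_add_inv_eq (norm_pos_iff.mpr ha) (inv_pos.mpr Rsqrt2_pos)
    (by linarith) with h | h
  · exact ⟨a⁻¹, inv_ne_zero ha, by rw [inv_inv, add_comm, haτ], by rw [norm_inv, h, inv_inv]⟩
  · exact ⟨a, ha, haτ, by rw [h, inv_inv]⟩

theorem discr_eq_mul {R : Type*} [CommRing R] {x t₁ t₂ : R} (hsum : t₁ + t₂ = -1)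
    (hprod : t₁ * t₂ = 2) :
    (x ^ 3 + 2 * x - 1) ^ 2 + 4 * x
      = (1 - x + x ^ 2) * (1 - t₁ * x + x ^ 2) * (1 - t₂ * x + x ^ 2) := by
  linear_combination (1 - x + x ^ 2) * x * (1 + x ^ 2) * hsum - (1 - x + x ^ 2) * x ^ 2 * hprod

theorem coeff_succ_two_mul_X_mul_sub {A : Type*} [CommRing A] (f : A⟦X⟧) {n : ℕ} (hn : 3 ≤ n) :
    coeff (n + 1) (2 * X * f - (X ^ 3 + 2 * X - 1)) = 2 * coeff n f := by
  have h3 : n + 1 ≠ 3 := by omega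
  have h0 : n ≠ 0 := by omega
  rw [← map_ofNat C 2, show C (2 : A) * X * f = X * (C 2 * f) by ring, map_sub,
    coeff_succ_X_mul]
  simp [coeff_X_pow, coeff_C, h3, h0]

noncomputable def discr : Polynomial ℂ :=
  (Polynomial.X ^ 3 + 2 * Polynomial.X - 1) ^ 2 + 4 * Polynomial.X

theorem coe_discr : (discr : ℂ⟦X⟧) = (X ^ 3 + 2 * X - 1) ^ 2 + 4 * X := by
  rw [discr, ← Polynomial.coeToPowerSeries.ringHom_apply]
  simp only [map_add, map_sub, map_mul, map_pow, map_one, map_ofNat,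
    Polynomial.coeToPowerSeries.ringHom_apply, Polynomial.coe_X]

theorem discr_eq_mul_C : discr = (1 - Polynomial.X + Polynomial.X ^ 2)
    * (1 - Polynomial.C τ * Polynomial.X + Polynomial.X ^ 2)
    * (1 - Polynomial.C (conj τ) * Polynomial.X + Polynomial.X ^ 2) :=
  discr_eq_mul (by rw [← Polynomial.C_add, τ_add_conj]; simp)
    (by rw [← Polynomial.C_mul, τ_mul_conj, map_ofNat Polynomial.C 2])

theorem eval_discr_eq_zero_and_eval_derivative_ne_zero {z : ℂ} (hz0 : z ≠ 0) (hzτ : z + z⁻¹ = τ)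
    (hz : ‖z‖ < 1) : discr.eval z = 0 ∧ discr.derivative.eval z ≠ 0 := by
  have hQ : 1 - τ * z + z ^ 2 = 0 := by rw [← hzτ]; field_simp; ring
  constructor
  · rw [discr_eq_mul_C]; simp [hQ]
  · rw [discr_eq_mul_C]
    simp only [Polynomial.derivative_mul, Polynomial.derivative_add, Polynomial.derivative_sub,
      Polynomial.derivative_one, Polynomial.derivative_X, Polynomial.derivative_X_pow,
      Polynomial.derivative_C, Polynomial.eval_add, Polynomial.eval_sub, Polynomial.eval_mul,
      Polynomial.eval_one, Polynomial.eval_X, Polynomial.eval_pow, Polynomial.eval_C,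
      Polynomial.eval_zero]
    have h2z : 2 * z - τ ≠ 0 := by
      rw [← hzτ]
      intro h
      have hsq : z * z = 1 := by field_simp at h; linear_combination h
      have := congrArg norm hsq
      rw [norm_mul, norm_one] at this
      nlinarith [norm_nonneg z]
    have hτ1 : τ - 1 ≠ 0 := fun h ↦ by
      have := congrArg Complex.im h
      simp [τ] at this
    have hτconj : τ - conj τ ≠ 0 := fun h ↦ by
      have := congrArg Complex.im h
      simp [τ] at this
    convert mul_ne_zero (mul_ne_zero (mul_ne_zero hτ1 hz0) h2z) (mul_ne_zero hτconj hz0) using 1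
    push_cast
    linear_combination ((2 * z - 1) * (1 - conj τ * z + z ^ 2) + (1 - z + z ^ 2) * (2 * z - conj τ)
      + (2 * z - τ) * (1 - z + z ^ 2 + (τ - conj τ) * z)) * hQ

noncomputable def discrSqrt (f : ℝ⟦X⟧) : ℂ⟦X⟧ :=
  PowerSeries.map Complex.ofRealHom (2 * X * f - (X ^ 3 + 2 * X - 1))

theorem norm_coeff_succ_discrSqrt (f : ℝ⟦X⟧) {n : ℕ} (hn : 3 ≤ n) :
    ‖coeff (n + 1) (discrSqrt f)‖ = 2 * |coeff n f| := by
  rw [discrSqrt, coeff_map, coeff_succ_two_mul_X_mul_sub f hn, map_mul, map_ofNat, norm_mul,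
    Complex.ofRealHom_eq_coe, Complex.norm_real, Real.norm_eq_abs]
  norm_num

variable {f : ℝ⟦X⟧} (hf : X * f ^ 2 - (X ^ 3 + 2 * X - 1) * f - 1 = 0)
include hf

theorem discrSqrt_sq : discrSqrt f ^ 2 = discr := by
  rw [discrSqrt, ← map_pow, sq_two_mul_X_mul_sub_eq hf, coe_discr]
  simp [map_ofNat]

theorem eventually_abs_coeff_le_pow {c : ℝ} (hc : Rsqrt2⁻¹ < c) :
    ∀ᶠ n in atTop, |coeff n f| ≤ c ^ n := by
  have hρ : 1 ≤ Rsqrt2⁻¹ := one_le_Rsqrt2_inv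
  have hρ0 : 0 ≤ Rsqrt2⁻¹ := zero_le_one.trans hρ
  have h1 : ‖(1 : ℂ) - 2‖ + ‖(1 : ℂ) + 2‖ ≤ 2 * (Rsqrt2⁻¹ + Rsqrt2⁻¹⁻¹) := by
    rw [inv_inv, add_comm Rsqrt2⁻¹, Rsqrt2_add_inv]
    norm_num
    linarith [Real.one_lt_sqrt_two]
  obtain ⟨S₁, hS₁, hS₁0, hS₁b⟩ := exists_sq_eq_one_sub_C_mul_X_add_X_sq 1 hρ h1
  obtain ⟨S₂, hS₂, hS₂0, hS₂b⟩ :=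
    exists_sq_eq_one_sub_C_mul_X_add_X_sq τ hρ norm_τ_sub_two_add_norm_τ_add_two.le
  obtain ⟨S₃, hS₃, hS₃0, hS₃b⟩ := exists_sq_eq_one_sub_C_mul_X_add_X_sq (conj τ) hρ
    norm_conj_τ_sub_two_add_norm_conj_τ_add_two.le
  have hS : discrSqrt f = S₁ * S₂ * S₃ := by
    refine eq_of_sq_eq_sq ?_ ?_ (by simp [hS₁0, hS₂0, hS₃0])
    · rw [discrSqrt_sq hf, coe_discr, mul_pow, mul_pow, hS₁, hS₂, hS₃, map_one, one_mul]
      exact discr_eq_mul (by rw [← map_add, τ_add_conj, map_neg, map_one])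
        (by rw [← map_mul, τ_mul_conj, map_ofNat])
    · simp [discrSqrt]
  have hbound (n : ℕ) : ‖coeff n (discrSqrt f)‖ ≤ (n + 1) ^ 5 * Rsqrt2⁻¹ ^ n := by
    rw [hS]; exact norm_coeff_mul_le hρ0 (norm_coeff_mul_le hρ0 hS₁b hS₂b) hS₃b n
  refine eventually_abs_le_pow_of_abs_le_mul_pow_mul_pow (A := 3 ^ 5 * Rsqrt2⁻¹ / 2) (k := 5)
    (inv_pos.mpr Rsqrt2_pos) hc ?_
  filter_upwards [eventually_ge_atTop 3] with n hn
  have h2 : (n : ℝ) + 1 + 1 ≤ 3 * n := by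
    have : (3 : ℝ) ≤ n := by exact_mod_cast hn
    linarith
  have key := hbound (n + 1)
  rw [norm_coeff_succ_discrSqrt f hn] at key
  push_cast at key
  calc |coeff n f| ≤ ((n : ℝ) + 1 + 1) ^ 5 * Rsqrt2⁻¹ ^ (n + 1) / 2 := by linarith
    _ ≤ (3 * n) ^ 5 * Rsqrt2⁻¹ ^ (n + 1) / 2 := by gcongr
    _ = 3 ^ 5 * Rsqrt2⁻¹ / 2 * n ^ 5 * Rsqrt2⁻¹ ^ n := by ring

theorem not_eventually_abs_coeff_le_pow {c : ℝ} (hc0 : 0 < c) (hc : c < Rsqrt2⁻¹) :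
    ¬ ∀ᶠ n in atTop, |coeff n f| ≤ c ^ n := by
  obtain ⟨z, hz0, hzτ, hzR⟩ := exists_add_inv_eq_τ_and_norm_eq
  obtain ⟨hPz, hP'z⟩ := eval_discr_eq_zero_and_eval_derivative_ne_zero hz0 hzτ (hzR ▸ Rsqrt2_lt_one)
  have hcz : c * ‖z‖ < 1 := by
    rw [hzR, ← inv_mul_cancel₀ Rsqrt2_pos.ne']
    exact mul_lt_mul_of_pos_right hc Rsqrt2_pos
  intro hbound
  refine not_eventually_norm_coeff_le_of_sq_eq_coe (discrSqrt_sq hf) hPz hP'z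
    (A := 2 / c) hc0.le hcz ?_
  obtain ⟨N, hN⟩ := eventually_atTop.mp hbound
  refine eventually_atTop.mpr ⟨N + 4, fun n hn ↦ ?_⟩
  obtain ⟨m, rfl⟩ : ∃ m, n = m + 1 := ⟨n - 1, by omega⟩
  rw [norm_coeff_succ_discrSqrt f (by omega), pow_succ, div_mul_eq_mul_div,
    mul_div_assoc, mul_div_cancel_right₀ _ hc0.ne']
  linarith [hN m (by omega)]

end QSqrtTwoPlusOne

theorem qSqrtTwoPlusOne_exists_unique_and_radius :
    (∃! f : PowerSeries ℝ,
      PowerSeries.X * f ^ 2 - (PowerSeries.X ^ 3 + 2 * PowerSeries.X - 1) * f - 1 = 0) ∧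
    ∀ f : PowerSeries ℝ,
      PowerSeries.X * f ^ 2 - (PowerSeries.X ^ 3 + 2 * PowerSeries.X - 1) * f - 1 = 0 →
        PowerSeries.coeff 0 f = 1 ∧
        Filter.limsup (fun n : ℕ => |PowerSeries.coeff n f| ^ ((n : ℝ)⁻¹))
          Filter.atTop = Rsqrt2⁻¹ := by
  have hB : constantCoeff (X ^ 3 + 2 * X - 1 : ℝ⟦X⟧) = -1 := by simp
  refine ⟨?_, fun f hf ↦ ⟨?_, ?_⟩⟩
  · obtain ⟨f, hf⟩ := exists_quadratic hB
    exact ⟨f, hf, fun g hg ↦ eq_of_quadratic (by simp [hB]) hg hf⟩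
  · rw [coeff_zero_eq_constantCoeff_apply]
    exact constantCoeff_eq_one_of_quadratic hB hf
  · exact Real.limsup_abs_rpow_inv_eq (inv_pos.mpr Rsqrt2_pos)
      (fun _ hc ↦ QSqrtTwoPlusOne.eventually_abs_coeff_le_pow hf hc)
      (fun _ hc0 hc ↦ QSqrtTwoPlusOne.not_eventually_abs_coeff_le_pow hf hc0 hc)
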